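/- arXiv:2202.03334 — 4 statements merged into one kernel-verified Lean document; each statement's English description precedes it below -/
import Mathlib

section
/- Consider a sequence of reals b₁, …, b_{K} with 0 ≤ b_k ≤ L for all k, and let N_k = max(1, ∑_{j<k} b_j). Then ∑_{k=1}^K b_k / N_k ≤ L·(4 + 2·log(1 + ∑_{k=1}^K b_k)). -/
theorem stmt_9 (K : ℕ) (L : ℝ) (hL : 1 ≤ L) (b : ℕ → ℝ)
    (hb : ∀ k < K, 0 ≤ b k ∧ b k ≤ L) :
    ∑ k ∈ Finset.range K, b k / max 1 (∑ j ∈ Finset.range k, b j) ≤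
      L * (4 + 2 * Real.log (1 + ∑ k ∈ Finset.range K, b k)) := by
  set S : ℕ → ℝ := fun k => ∑ j ∈ Finset.range k, b j with hS
  have hL0 : (0:ℝ) < L := by linarith
  have hSnn : ∀ k, k ≤ K → 0 ≤ S k := by
    intro k hk
    apply Finset.sum_nonneg
    intro j hj
    exact (hb j (lt_of_lt_of_le (Finset.mem_range.mp hj) hk)).1
  have main : ∀ n, n ≤ K → ∑ k ∈ Finset.range n, b k / max 1 (S k)
      ≤ min (S n) (2*L) + 2*(Real.log (max L (S n)) - Real.log L) := by
    intro n hn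
    induction n with
    | zero => simp [hS, hSnn 0 (Nat.zero_le K), hL0.le]
    | succ m ih =>
      have hmK : m < K := Nat.lt_of_lt_of_le (Nat.lt_succ_self m) hn
      have ihm := ih (le_of_lt hmK)
      have hbm := hb m hmK
      have hsm : 0 ≤ S m := hSnn m (le_of_lt hmK)
      have hstep : S (m+1) = S m + b m := by
        simp [hS, Finset.sum_range_succ]
      rw [Finset.sum_range_succ]
      have key : b m / max 1 (S m) ≤
          (min (S (m+1)) (2*L) + 2*(Real.log (max L (S (m+1))) - Real.log L))
          - (min (S m) (2*L) + 2*(Real.log (max L (S m)) - Real.log L)) := by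
        by_cases hsL : L ≤ S m
        · -- large regime
          have hs1 : (1:ℝ) ≤ S m := le_trans hL hsL
          have hspos : 0 < S m := lt_of_lt_of_le zero_lt_one hs1
          have hmax1 : max 1 (S m) = S m := max_eq_right hs1
          have hmaxL : max L (S m) = S m := max_eq_right hsL
          have htge : S m ≤ S (m+1) := by rw [hstep]; linarith [hbm.1]
          have hmaxL' : max L (S (m+1)) = S (m+1) :=
            max_eq_right (le_trans hsL htge)
          have htpos : 0 < S (m+1) := lt_of_lt_of_le hspos htge
          have hmin : min (S m) (2*L) ≤ min (S (m+1)) (2*L) :=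
            min_le_min htge le_rfl
          -- log inequality: log(s/t) ≤ s/t - 1
          have hlog := Real.log_le_sub_one_of_pos (div_pos hspos htpos)
          rw [Real.log_div (ne_of_gt hspos) (ne_of_gt htpos)] at hlog
          -- so log t - log s ≥ 1 - s/t = b/t
          have h1 : b m / S (m+1) ≤ Real.log (S (m+1)) - Real.log (S m) := by
            have : 1 - S m / S (m+1) = b m / S (m+1) := by
              field_simp
              linarith [hstep]
            linarith [this ▸ (by linarith : 1 - S m / S (m+1) ≤ Real.log (S (m+1)) - Real.log (S m))]
          have ht2s : S (m+1) ≤ 2 * S m := by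
            rw [hstep]; linarith [hbm.2]
          have h2 : b m / S m ≤ 2 * (b m / S (m+1)) := by
            rw [show 2*(b m / S (m+1)) = (2*b m)/S (m+1) by ring,
              div_le_div_iff₀ hspos htpos]
            nlinarith [mul_le_mul_of_nonneg_left ht2s hbm.1]
          rw [hmax1, hmaxL, hmaxL']
          nlinarith [h1, h2, hmin]
        · -- small regime
          push_neg at hsL
          have hmaxLs : max L (S m) = L := max_eq_left (le_of_lt hsL)
          have hminS : min (S m) (2*L) = S m := min_eq_left (by linarith)
          have ht2L : S (m+1) ≤ 2*L := by rw [hstep]; linarith [hbm.2]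
          have htnn : 0 ≤ S (m+1) := by rw [hstep]; linarith [hbm.1]
          have hminT : min (S (m+1)) (2*L) = S (m+1) := min_eq_left ht2L
          have hdenom : (1:ℝ) ≤ max 1 (S m) := le_max_left _ _
          have hdiv : b m / max 1 (S m) ≤ b m :=
            div_le_self hbm.1 hdenom
          have hlogmono : Real.log L ≤ Real.log (max L (S (m+1))) :=
            Real.log_le_log hL0 (le_max_left _ _)
          rw [hmaxLs, hminS, hminT]
          linarith [hstep]
      linarith [ihm, key]
  have hSK : 0 ≤ S K := hSnn K le_rfl
  have hfin := main K le_rfl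
  have hmaxle : max L (S K) ≤ L * (1 + S K) := by
    apply max_le
    · nlinarith
    · nlinarith
  have hlogle : Real.log (max L (S K)) ≤ Real.log L + Real.log (1 + S K) := by
    rw [← Real.log_mul (ne_of_gt hL0) (by positivity)]
    exact Real.log_le_log (lt_of_lt_of_le hL0 (le_max_left _ _)) hmaxle
  have hlognn : 0 ≤ Real.log (1 + S K) := Real.log_nonneg (by linarith)
  have : min (S K) (2*L) ≤ 2*L := min_le_right _ _
  nlinarith [hfin]
end

section
/- Let p, q ∈ Δ(A) be probability distributions on a finite set A with q(a) > 0 for all a, let η > 0 and ℓ ∈ ℝ^A, and suppose p(a) ∝ q(a)·exp(−η·ℓ(a)). Then KL(q, p) + KL(p, q) = η·⟨q − p, ℓ⟩, and in particular ⟨q − p, ℓ⟩ ≥ 0. -/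
theorem stmt_11 {A : Type*} [Fintype A] [Nonempty A] (η : ℝ) (hη : 0 < η)
    (ℓ p q : A → ℝ)
    (hq0 : ∀ a, 0 < q a) (hq1 : ∑ a, q a = 1)
    (hp0 : ∀ a, 0 ≤ p a) (hp1 : ∑ a, p a = 1)
    (hp : ∀ a, p a = q a * Real.exp (-η * ℓ a) / ∑ a', q a' * Real.exp (-η * ℓ a')) :
    (∑ a, q a * Real.log (q a / p a)) + (∑ a, p a * Real.log (p a / q a)) =
        η * ∑ a, (q a - p a) * ℓ a ∧
      0 ≤ ∑ a, (q a - p a) * ℓ a := by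
  set Z : ℝ := ∑ a', q a' * Real.exp (-η * ℓ a') with hZ
  have hZpos : 0 < Z := by
    apply Finset.sum_pos
    · intro a _; exact mul_pos (hq0 a) (Real.exp_pos _)
    · exact Finset.univ_nonempty
  have hppos : ∀ a, 0 < p a := by
    intro a; rw [hp a]
    exact div_pos (mul_pos (hq0 a) (Real.exp_pos _)) hZpos
  have hlp : ∀ a, Real.log (p a) = Real.log (q a) + (-η * ℓ a) - Real.log Z := by
    intro a
    rw [hp a, Real.log_div (ne_of_gt (mul_pos (hq0 a) (Real.exp_pos _))) hZpos.ne',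
      Real.log_mul (hq0 a).ne' (Real.exp_pos _).ne', Real.log_exp]
  have hlog1 : ∀ a, Real.log (q a / p a) = Real.log Z + η * ℓ a := by
    intro a
    rw [Real.log_div (hq0 a).ne' (hppos a).ne', hlp a]; ring
  have hlog2 : ∀ a, Real.log (p a / q a) = -(Real.log Z + η * ℓ a) := by
    intro a
    rw [Real.log_div (hppos a).ne' (hq0 a).ne', hlp a]; ring
  have hKL1 : (∑ a, q a * Real.log (q a / p a)) = Real.log Z + η * ∑ a, q a * ℓ a := by
    simp only [hlog1, mul_add]
    rw [Finset.sum_add_distrib, ← Finset.sum_mul, hq1, one_mul, Finset.mul_sum]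
    congr 1; apply Finset.sum_congr rfl; intro a _; ring
  have hKL2 : (∑ a, p a * Real.log (p a / q a)) = -(Real.log Z + η * ∑ a, p a * ℓ a) := by
    simp only [hlog2, mul_neg]
    rw [Finset.sum_neg_distrib, neg_inj]
    simp only [mul_add]
    rw [Finset.sum_add_distrib, ← Finset.sum_mul, hp1, one_mul, Finset.mul_sum]
    congr 1; apply Finset.sum_congr rfl; intro a _; ring
  have heq : (∑ a, q a * Real.log (q a / p a)) + (∑ a, p a * Real.log (p a / q a)) =
      η * ∑ a, (q a - p a) * ℓ a := by
    rw [hKL1, hKL2]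
    simp only [sub_mul, Finset.sum_sub_distrib, mul_sub]
    ring_nf
  refine ⟨heq, ?_⟩
  have h1 : 0 ≤ ∑ a, q a * Real.log (q a / p a) := by
    have hle : (∑ a, q a * Real.log (p a / q a)) ≤ 0 := by
      calc (∑ a, q a * Real.log (p a / q a))
          ≤ ∑ a, q a * (p a / q a - 1) := by
            apply Finset.sum_le_sum; intro a _
            exact mul_le_mul_of_nonneg_left
              (Real.log_le_sub_one_of_pos (div_pos (hppos a) (hq0 a))) (hq0 a).le
        _ = ∑ a, (p a - q a) := by
            apply Finset.sum_congr rfl; intro a _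
            rw [mul_comm, sub_mul, one_mul, div_mul_cancel₀ _ (hq0 a).ne']
        _ = 0 := by rw [Finset.sum_sub_distrib, hp1, hq1, sub_self]
    have h : ∀ a, q a * Real.log (q a / p a) = -(q a * Real.log (p a / q a)) := by
      intro a
      rw [show q a / p a = (p a / q a)⁻¹ by rw [inv_div], Real.log_inv]; ring
    simp only [h, Finset.sum_neg_distrib]
    linarith
  have h2 : 0 ≤ ∑ a, p a * Real.log (p a / q a) := by
    have hle : (∑ a, p a * Real.log (q a / p a)) ≤ 0 := by
      calc (∑ a, p a * Real.log (q a / p a))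
          ≤ ∑ a, p a * (q a / p a - 1) := by
            apply Finset.sum_le_sum; intro a _
            exact mul_le_mul_of_nonneg_left
              (Real.log_le_sub_one_of_pos (div_pos (hq0 a) (hppos a))) (hp0 a)
        _ = ∑ a, (q a - p a) := by
            apply Finset.sum_congr rfl; intro a _
            rw [mul_comm, sub_mul, one_mul, div_mul_cancel₀ _ (hppos a).ne']
        _ = 0 := by rw [Finset.sum_sub_distrib, hq1, hp1, sub_self]
    have h : ∀ a, p a * Real.log (p a / q a) = -(p a * Real.log (q a / p a)) := by
      intro a
      rw [show p a / q a = (q a / p a)⁻¹ by rw [inv_div], Real.log_inv]; ring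
    simp only [h, Finset.sum_neg_distrib]
    linarith
  nlinarith [h1, h2, heq]
end

section
/- Let {Z_k}_{k=1}^K be random variables adapted so that Z_k ∈ [0,1] and E[Z_k | F_{k−1}] = z_k with z_k ≤ x_k for known constants x_k ≥ 0, and let x̄_k ≥ x_k, θ > 0. Then with probability at least 1 − δ: ∑_{k=1}^K ( Z_k/(x̄_k + θ) − z_k/x̄_k ) ≤ log(1/δ)/(2θ), where terms with x̄_k = 0 (forcing x_k = z_k = Z_k = 0 a.s.) are interpreted as 0. -/
/-!
Let `Y_k` be the `k`-th summand and `a = 2θ / (x̄_k + θ)`. Convexity of `exp` on `[0, 1]` and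
`E[Z_k | F_{k-1}] = z_k` give `E[exp (2θ Y_k) | F_{k-1}] ≤ exp (-2θ z_k / x̄_k) (1 + (e^a - 1) z_k)`,
and `e^a - 1 ≤ 2θ / x̄_k` (this is `artanh u ≥ u` for `u = θ / (x̄_k + θ)`), so that conditional
expectation is at most `1`. Peeling off one factor at a time, `E[exp (2θ ∑ Y_k)] ≤ 1`, and the
Chernoff bound at level `log (1/δ) / (2θ)` finishes the proof.
-/

open MeasureTheory ProbabilityTheory Real Finset

lemma two_mul_le_log_one_add_sub_log_one_sub {x : ℝ} (h0 : 0 ≤ x) (h1 : x < 1) :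
    2 * x ≤ log (1 + x) - log (1 - x) := by
  simpa using le_hasSum (hasSum_log_sub_log_of_abs_lt_one (by rwa [abs_of_nonneg h0])) 0
    fun j _ => by positivity

lemma exp_two_mul_div_add_le {x θ : ℝ} (hx : 0 < x) (hθ : 0 ≤ θ) :
    exp (2 * θ / (x + θ)) ≤ 1 + 2 * θ / x := by
  have hxθ : 0 < x + θ := by positivity
  set u := θ / (x + θ)
  have hu1 : u < 1 := (div_lt_one hxθ).2 (by linarith)
  have hpos : 0 < 1 + u ∧ 0 < 1 - u := ⟨by positivity, by linarith⟩
  calc exp (2 * θ / (x + θ)) = exp (2 * u) := by rw [mul_div_assoc]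
    _ ≤ exp (log (1 + u) - log (1 - u)) :=
        exp_le_exp.2 (two_mul_le_log_one_add_sub_log_one_sub (by positivity) hu1)
    _ = (1 + u) / (1 - u) := by rw [exp_sub, exp_log hpos.1, exp_log hpos.2]
    _ = 1 + 2 * θ / x := by
        rw [div_eq_iff hpos.2.ne']
        simp only [u]
        field_simp
        ring

lemma exp_mul_le_one_add_mul (a : ℝ) {t : ℝ} (ht0 : 0 ≤ t) (ht1 : t ≤ 1) :
    exp (a * t) ≤ 1 + (exp a - 1) * t := by
  have h := convexOn_exp.2 (Set.mem_univ 0) (Set.mem_univ a) (by linarith : 0 ≤ 1 - t) ht0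
    (by ring)
  simp only [smul_eq_mul, mul_zero, zero_add, exp_zero] at h
  rw [mul_comm]
  linarith

noncomputable def increment (θ xbar z t : ℝ) : ℝ :=
  if xbar = 0 then 0 else t / (xbar + θ) - z / xbar

@[fun_prop]
lemma continuous_increment (θ xbar z : ℝ) : Continuous (increment θ xbar z) := by
  unfold increment
  split_ifs <;> fun_prop

lemma increment_mono {θ xbar z : ℝ} (h : 0 ≤ xbar + θ) : Monotone (increment θ xbar z) := by
  intro s t hst
  unfold increment
  split_ifs
  · exact le_rfl
  · gcongr

section

variable {Ω : Type*} {m m0 : MeasurableSpace Ω} {μ : Measure Ω}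

lemma condExp_exp_mul_le [IsFiniteMeasure μ] (hm : m ≤ m0) {X : Ω → ℝ}
    (hX : AEStronglyMeasurable X μ) (hX01 : ∀ ω, X ω ∈ Set.Icc (0 : ℝ) 1) (a : ℝ) :
    μ[fun ω => exp (a * X ω) | m] ≤ᵐ[μ] fun ω => 1 + (exp a - 1) * μ[X | m] ω := by
  have hX_int : Integrable X μ :=
    .of_bound hX 1 (ae_of_all _ fun ω => by
      rw [norm_of_nonneg (hX01 ω).1]; exact (hX01 ω).2)
  have hexp_int : Integrable (fun ω => exp (a * X ω)) μ :=
    .of_bound (continuous_exp.comp_aestronglyMeasurable (hX.const_mul a)) (exp |a|)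
      (ae_of_all _ fun ω => by
        rw [norm_of_nonneg (exp_pos _).le, exp_le_exp]
        calc a * X ω ≤ |a| * X ω := by gcongr; exacts [(hX01 ω).1, le_abs_self a]
          _ ≤ |a| := mul_le_of_le_one_right (abs_nonneg a) (hX01 ω).2)
  have hchord : (fun ω => exp (a * X ω)) ≤ᵐ[μ] (fun _ => (1 : ℝ)) + (exp a - 1) • X :=
    ae_of_all _ fun ω => exp_mul_le_one_add_mul a (hX01 ω).1 (hX01 ω).2
  refine (condExp_mono hexp_int ((integrable_const 1).add (hX_int.smul _)) hchord).trans ?_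
  filter_upwards [condExp_add (m := m) (integrable_const (1 : ℝ)) (hX_int.smul (exp a - 1)),
    condExp_smul (μ := μ) (exp a - 1) X m] with ω hadd hsmul
  simp [hadd, hsmul, condExp_const hm]

lemma condExp_exp_ratio_le_one [IsFiniteMeasure μ] (hm : m ≤ m0) {X : Ω → ℝ}
    (hX : AEStronglyMeasurable X μ) (hX01 : ∀ ω, X ω ∈ Set.Icc (0 : ℝ) 1) {z x θ : ℝ}
    (hcond : μ[X | m] =ᵐ[μ] fun _ => z) (hx : 0 < x) (hθ : 0 ≤ θ) :
    μ[fun ω => exp (2 * θ * (X ω / (x + θ) - z / x)) | m] ≤ᵐ[μ] 1 := by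
  set a := 2 * θ / (x + θ)
  set b := 2 * θ * (z / x)
  have hsplit : (fun ω => exp (2 * θ * (X ω / (x + θ) - z / x)))
      = exp (-b) • fun ω => exp (a * X ω) := by
    ext ω
    rw [Pi.smul_apply, smul_eq_mul, ← exp_add]
    congr 1
    ring
  have hz : ∀ᵐ _ ∂μ, 0 ≤ z := by
    filter_upwards [condExp_nonneg (m := m) (ae_of_all _ fun ω => (hX01 ω).1), hcond]
      with ω hnonneg hω
    exact hω ▸ hnonneg
  rw [hsplit]
  filter_upwards [condExp_smul (μ := μ) (exp (-b)) (fun ω => exp (a * X ω)) m,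
    condExp_exp_mul_le hm hX hX01 a, hcond, hz] with ω hsmul hle hω hz0
  have hb : 1 + (exp a - 1) * z ≤ exp b :=
    calc 1 + (exp a - 1) * z ≤ 1 + 2 * θ / x * z := by
          gcongr; linarith [exp_two_mul_div_add_le hx hθ]
      _ = b + 1 := by ring
      _ ≤ exp b := add_one_le_exp b
  rw [hsmul, Pi.smul_apply, smul_eq_mul, Pi.one_apply]
  calc exp (-b) * μ[fun ω => exp (a * X ω) | m] ω ≤ exp (-b) * exp b := by
        gcongr; exact hle.trans (hω ▸ hb)
    _ = 1 := by rw [← exp_add, neg_add_cancel, exp_zero]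

lemma condExp_exp_increment_le_one [IsFiniteMeasure μ] (hm : m ≤ m0) {X : Ω → ℝ}
    (hX : AEStronglyMeasurable X μ) (hX01 : ∀ ω, X ω ∈ Set.Icc (0 : ℝ) 1) {z x θ : ℝ}
    (hcond : μ[X | m] =ᵐ[μ] fun _ => z) (hx : 0 ≤ x) (hθ : 0 ≤ θ) :
    μ[fun ω => exp (2 * θ * increment θ x z (X ω)) | m] ≤ᵐ[μ] 1 := by
  rcases hx.eq_or_lt with rfl | hx
  · simp only [increment, if_true, mul_zero, exp_zero, condExp_const hm]
    rfl
  · simpa [increment, hx.ne'] using condExp_exp_ratio_le_one hm hX hX01 hcond hx hθ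

lemma integral_prod_le_one_of_condExp_le_one [IsProbabilityMeasure μ] {F : Filtration ℕ m0}
    {g : ℕ → Ω → ℝ} (hg0 : ∀ k ω, 0 ≤ g k ω) (hg_bdd : ∀ k, ∃ C, ∀ ω, g k ω ≤ C)
    (hg_meas : ∀ k, StronglyMeasurable[F (k + 1)] (g k)) (hg_cond : ∀ k, μ[g k | F k] ≤ᵐ[μ] 1)
    (n : ℕ) :
    Integrable (fun ω => ∏ k ∈ range n, g k ω) μ ∧ ∫ ω, ∏ k ∈ range n, g k ω ∂μ ≤ 1 := by
  induction n with
  | zero => simp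
  | succ n ih =>
    obtain ⟨C, hC⟩ := hg_bdd n
    set P := fun ω => ∏ k ∈ range n, g k ω
    have hP_meas : StronglyMeasurable[F n] P :=
      Finset.stronglyMeasurable_fun_prod _
        fun k hk => (hg_meas k).mono (F.mono (Finset.mem_range.1 hk))
    have hg_bound : ∀ᵐ ω ∂μ, ‖g n ω‖ ≤ C :=
      ae_of_all _ fun ω => by rw [norm_of_nonneg (hg0 n ω)]; exact hC ω
    have hg_int : Integrable (g n) μ :=
      .of_bound ((hg_meas n).mono (F.le _)).aestronglyMeasurable C hg_bound
    have hPg_int : Integrable (P * g n) μ :=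
      ih.1.mul_bdd ((hg_meas n).mono (F.le _)).aestronglyMeasurable hg_bound
    have hpull := condExp_mul_of_stronglyMeasurable_left hP_meas hPg_int hg_int
    simp_rw [prod_range_succ]
    refine ⟨hPg_int, ?_⟩
    calc ∫ ω, P ω * g n ω ∂μ = ∫ ω, μ[P * g n | F n] ω ∂μ := (integral_condExp (F.le n)).symm
      _ = ∫ ω, P ω * μ[g n | F n] ω ∂μ := integral_congr_ae hpull
      _ ≤ ∫ ω, P ω ∂μ := by
          refine integral_mono_ae (integrable_condExp.congr hpull) ih.1 ?_
          filter_upwards [hg_cond n] with ω hω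
          exact mul_le_of_le_one_right (prod_nonneg fun k _ => hg0 k ω) hω
      _ ≤ 1 := ih.2

lemma measure_lt_le_of_integral_exp_le_one [IsFiniteMeasure μ] {S : Ω → ℝ} {t δ : ℝ}
    (ht : 0 < t) (hδ : 0 < δ) (hint : Integrable (fun ω => exp (t * S ω)) μ)
    (hmgf : ∫ ω, exp (t * S ω) ∂μ ≤ 1) :
    μ {ω | log (1 / δ) / t < S ω} ≤ ENNReal.ofReal δ := by
  have hchernoff := measure_ge_le_exp_mul_mgf (log (1 / δ) / t) ht.le hint
  have hexp : exp (-t * (log (1 / δ) / t)) = δ := by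
    rw [neg_mul, mul_div_cancel₀ _ ht.ne', one_div, log_inv, neg_neg, exp_log hδ]
  rw [hexp] at hchernoff
  calc μ {ω | log (1 / δ) / t < S ω} ≤ μ {ω | log (1 / δ) / t ≤ S ω} :=
        measure_mono (Set.ofPred_subset_ofPred.2 fun _ ↦ le_of_lt)
    _ = ENNReal.ofReal (μ.real {ω | log (1 / δ) / t ≤ S ω}) :=
        (ofReal_measureReal (measure_ne_top _ _)).symm
    _ ≤ ENNReal.ofReal δ :=
        ENNReal.ofReal_le_ofReal (hchernoff.trans (mul_le_of_le_one_right hδ.le hmgf))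

end

theorem stmt_12_general {Ω : Type*} {m0 : MeasurableSpace Ω} (μ : Measure Ω) [IsProbabilityMeasure μ]
    (F : Filtration ℕ m0) (K : ℕ) (Z : ℕ → Ω → ℝ) (z x xbar : ℕ → ℝ) (θ δ : ℝ)
    (hθ : 0 < θ) (hδ0 : 0 < δ)
    (hZ01 : ∀ k ω, Z k ω ∈ Set.Icc (0 : ℝ) 1)
    (hadapt : ∀ k, StronglyMeasurable[F (k + 1)] (Z k))
    (hcond : ∀ k, μ[Z k | F k] =ᵐ[μ] fun _ => z k)
    (hx0 : ∀ k, 0 ≤ x k) (hxx : ∀ k, x k ≤ xbar k) :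
    μ {ω | Real.log (1 / δ) / (2 * θ) <
        ∑ k ∈ Finset.range K,
          (if xbar k = 0 then 0 else Z k ω / (xbar k + θ) - z k / xbar k)} ≤
      ENNReal.ofReal δ := by
  set g : ℕ → Ω → ℝ := fun k ω => exp (2 * θ * increment θ (xbar k) (z k) (Z k ω))
  have hxbar (k : ℕ) : 0 ≤ xbar k := (hx0 k).trans (hxx k)
  have hg_meas (k : ℕ) : StronglyMeasurable[F (k + 1)] (g k) :=
    (by fun_prop : Continuous fun t => exp (2 * θ * increment θ (xbar k) (z k) t))
      |>.comp_stronglyMeasurable (hadapt k)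
  have hg_bdd (k : ℕ) : ∃ C, ∀ ω, g k ω ≤ C :=
    ⟨_, fun ω => exp_le_exp.2 <| mul_le_mul_of_nonneg_left
      (increment_mono (by linarith [hxbar k]) (hZ01 k ω).2) (by positivity)⟩
  have hg_cond (k : ℕ) : μ[g k | F k] ≤ᵐ[μ] 1 :=
    condExp_exp_increment_le_one (F.le k) ((hadapt k).mono (F.le _)).aestronglyMeasurable
      (hZ01 k) (hcond k) (hxbar k) hθ.le
  obtain ⟨hint, hle⟩ := integral_prod_le_one_of_condExp_le_one (fun k ω => (exp_pos _).le)
    hg_bdd hg_meas hg_cond K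
  simp only [← exp_sum, ← mul_sum] at hint hle
  exact measure_lt_le_of_integral_exp_le_one (by positivity) hδ0 hint hle

theorem stmt_12 {Ω : Type*} {m0 : MeasurableSpace Ω} (μ : Measure Ω) [IsProbabilityMeasure μ]
    (F : Filtration ℕ m0) (K : ℕ) (Z : ℕ → Ω → ℝ) (z x xbar : ℕ → ℝ) (θ δ : ℝ)
    (hθ : 0 < θ) (hδ0 : 0 < δ) (hδ1 : δ < 1)
    (hZ01 : ∀ k ω, Z k ω ∈ Set.Icc (0 : ℝ) 1)
    (hadapt : ∀ k, StronglyMeasurable[F (k + 1)] (Z k))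
    (hcond : ∀ k, μ[Z k | F k] =ᵐ[μ] fun _ => z k)
    (hzx : ∀ k, z k ≤ x k) (hx0 : ∀ k, 0 ≤ x k) (hxx : ∀ k, x k ≤ xbar k) :
    μ {ω | Real.log (1 / δ) / (2 * θ) <
        ∑ k ∈ Finset.range K,
          (if xbar k = 0 then 0 else Z k ω / (xbar k + θ) - z k / xbar k)} ≤
      ENNReal.ofReal δ :=
  stmt_12_general μ F K Z z x xbar θ δ hθ hδ0 hZ01 hadapt hcond hx0 hxx
end

section
/- Let Z ∈ [0,1] be a random variable with mean z, and let x̄ > 0 with z ≤ x̄, θ > 0. Then E[exp(2θ·Z/(x̄ + θ))] ≤ exp(2θ·z/x̄). -/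
open MeasureTheory

/-
Since `log (1 + s) ≥ 2s / (s + 2)` for `s ≥ 0`, taking `s = 2θt/x̄` gives, for `t ∈ [0,1]`,
`exp (2θt/(x̄+θ)) ≤ exp (2θt/(x̄+θt)) ≤ 1 + 2θt/x̄`. This bound is affine in `t`, so taking
expectations gives `E[exp (2θZ/(x̄+θ))] ≤ 1 + 2θz/x̄ ≤ exp (2θz/x̄)`.
-/

namespace Real

lemma exp_two_mul_div_add_two_le {s : ℝ} (hs : 0 ≤ s) : exp (2 * s / (s + 2)) ≤ 1 + s :=
  (le_log_iff_exp_le (by linarith)).mp (le_log_one_add_of_nonneg hs)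

lemma exp_two_mul_mul_div_add_le {x θ t : ℝ} (hx : 0 < x) (hθ : 0 ≤ θ) (ht₀ : 0 ≤ t)
    (ht₁ : t ≤ 1) : exp (2 * θ * t / (x + θ)) ≤ 1 + 2 * θ / x * t := by
  have hθt : θ * t ≤ θ := mul_le_of_le_one_right hθ ht₁
  have hs : 0 ≤ 2 * θ / x * t := by positivity
  calc exp (2 * θ * t / (x + θ))
      ≤ exp (2 * θ * t / (x + θ * t)) := by gcongr
    _ = exp (2 * (2 * θ / x * t) / (2 * θ / x * t + 2)) := by
        congr 1
        field_simp
        ring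
    _ ≤ 1 + 2 * θ / x * t := exp_two_mul_div_add_two_le hs

end Real

theorem stmt_13_general {Ω : Type*} [MeasurableSpace Ω] (μ : Measure Ω) [IsProbabilityMeasure μ]
    (Z : Ω → ℝ) (hZmeas : Measurable Z) (hZ : ∀ ω, Z ω ∈ Set.Icc (0 : ℝ) 1)
    (z xbar θ : ℝ) (hz : (∫ ω, Z ω ∂μ) = z) (hx : 0 < xbar) (hθ : 0 < θ) :
    (∫ ω, Real.exp (2 * θ * Z ω / (xbar + θ)) ∂μ) ≤ Real.exp (2 * θ * z / xbar) := by
  have hZint : Integrable Z μ :=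
    Integrable.of_bound hZmeas.aestronglyMeasurable 1 (ae_of_all _ fun ω => by
      rw [Real.norm_eq_abs, abs_le]
      exact ⟨by linarith [(hZ ω).1], (hZ ω).2⟩)
  calc (∫ ω, Real.exp (2 * θ * Z ω / (xbar + θ)) ∂μ)
      ≤ ∫ ω, (1 + 2 * θ / xbar * Z ω) ∂μ :=
        integral_mono_of_nonneg (ae_of_all _ fun _ => (Real.exp_pos _).le)
          ((integrable_const 1).add (hZint.const_mul _))
          (ae_of_all _ fun ω => Real.exp_two_mul_mul_div_add_le hx hθ.le (hZ ω).1 (hZ ω).2)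
    _ = 1 + 2 * θ * z / xbar := by
        rw [integral_add (integrable_const _) (hZint.const_mul _), integral_const,
          integral_const_mul, hz, probReal_univ, one_smul]
        ring
    _ ≤ Real.exp (2 * θ * z / xbar) := by linarith [Real.add_one_le_exp (2 * θ * z / xbar)]

theorem stmt_13 {Ω : Type*} [MeasurableSpace Ω] (μ : Measure Ω) [IsProbabilityMeasure μ]
    (Z : Ω → ℝ) (hZmeas : Measurable Z) (hZ : ∀ ω, Z ω ∈ Set.Icc (0 : ℝ) 1)
    (z xbar θ : ℝ) (hz : (∫ ω, Z ω ∂μ) = z) (hzx : z ≤ xbar) (hx : 0 < xbar) (hθ : 0 < θ) :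
    (∫ ω, Real.exp (2 * θ * Z ω / (xbar + θ)) ∂μ) ≤ Real.exp (2 * θ * z / xbar) :=
  stmt_13_general μ Z hZmeas hZ z xbar θ hz hx hθ
end
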